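/- arXiv:2206.09620 — 2 statements merged into one kernel-verified Lean document; each statement's English description precedes it below -/
import Mathlib

section
/- Assume 𝒮_A(Δ) is compact and fix an adversary strategy (Ã₁,…,Ã_M) ∈ 𝒮_A(Δ). There exists ε₀ ∈ (0,1) such that, for every i ∈ [M], the family of random variables { T*/log(1/α) : 0 < α ≤ ε₀ } is uniformly integrable under P_i; that is, lim_{η→∞} sup_{0<α≤ε₀} E_i[ (T*/log(1/α)) · 1{ T*/log(1/α) ≥ η } ] = 0. -/
open MeasureTheory Filter Finset Set Topology
open scoped ENNReal NNReal ENat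

namespace AHT

noncomputable section

variable {X : Type*}

/-- A probability distribution on a finite alphabet. -/
def IsDist [Fintype X] (P : X → ℝ) : Prop :=
  (∀ x, 0 ≤ P x) ∧ ∑ x, P x = 1

/-- Kullback–Leibler divergence. -/
def KL [Fintype X] (P Q : X → ℝ) : ℝ :=
  ∑ a, P a * Real.log (P a / Q a)

/-- Bhattacharyya distance. -/
def Bhat [Fintype X] (Q0 Q1 : X → ℝ) : ℝ :=
  -Real.log (∑ x, (Q0 x) ^ ((1 : ℝ) / 2) * (Q1 x) ^ ((1 : ℝ) / 2))

/-- Empirical distribution (type) of the first `n` samples. -/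
def emp [Fintype X] [DecidableEq X] (n : ℕ) (ω : ℕ → X) (a : X) : ℝ :=
  (((Finset.range n).filter fun k => ω k = a).card : ℝ) / n

/-- Row-stochastic matrix (adversary channel). -/
def RowStoch [Fintype X] (A : X → X → ℝ) : Prop :=
  (∀ x y, 0 ≤ A x y) ∧ ∀ x, ∑ y, A x y = 1

/-- Output distribution of channel `A` when the input distribution is `P`. -/
def push [Fintype X] (P : X → ℝ) (A : X → X → ℝ) (y : X) : ℝ :=
  ∑ x, P x * A x y

/-- `μ` is the law of an i.i.d. sequence with one-dimensional marginal `Q`. -/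
def IsIID [Fintype X] [MeasurableSpace X] (μ : Measure (ℕ → X)) (Q : X → ℝ) : Prop :=
  IsProbabilityMeasure μ ∧
    ∀ (n : ℕ) (v : Fin n → X),
      μ {ω | ∀ k : Fin n, ω (k : ℕ) = v k} = ENNReal.ofReal (∏ k, Q (v k))

/-- Admissible adversary channels for hypothesis distribution `Pi`. -/
def Adm [Fintype X] (d : (X → ℝ) → (X → ℝ) → ℝ) (Δ : ℝ) (Pi : X → ℝ) :
    Set (X → X → ℝ) :=
  {A | RowStoch A ∧ d Pi (push Pi A) ≤ Δ ∧ ∀ y, 0 < push Pi A y}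

/-- The constant `C = Σ_{n ≥ 1} e^{-n^{1-ζ}}` with `ζ = 0.85`. -/
def Cζ : ℝ := ∑' n : ℕ, Real.exp (-((n : ℝ) + 1) ^ (0.15 : ℝ))

/-- The thresholds `γ_n` (with `K = |𝒳|`). -/
def gammaTh (K M : ℕ) (α : ℝ) (n : ℕ) : ℝ :=
  Real.log (Cζ / α) / n + 1 / (n : ℝ) ^ (0.85 : ℝ) +
    ((K : ℝ) * Real.log ((n : ℝ) + 1) + Real.log ((M : ℝ) - 1)) / n

/-- The statistic `Z_i^{(n)}`. -/
def Zstat [Fintype X] [DecidableEq X] {M : ℕ} (P : Fin M → X → ℝ)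
    (d : (X → ℝ) → (X → ℝ) → ℝ) (Δ : ℝ) (i : Fin M) (n : ℕ) (ω : ℕ → X) : ℝ :=
  sInf {r | ∃ j, j ≠ i ∧ ∃ A ∈ Adm d Δ (P j), r = KL (emp n ω) (push (P j) A)}

/-- The one-sided stopping times `T_i`. -/
def Ti [Fintype X] [DecidableEq X] {M : ℕ} (P : Fin M → X → ℝ)
    (d : (X → ℝ) → (X → ℝ) → ℝ) (Δ α : ℝ) (i : Fin M) (ω : ℕ → X) : ℕ∞ :=
  sInf {t : ℕ∞ | ∃ n : ℕ, t = (n : ℕ∞) ∧ 1 ≤ n ∧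
    gammaTh (Fintype.card X) M α n ≤ Zstat P d Δ i n ω}

/-- The stopping time `T*`. -/
def Tstar [Fintype X] [DecidableEq X] {M : ℕ} (P : Fin M → X → ℝ)
    (d : (X → ℝ) → (X → ℝ) → ℝ) (Δ α : ℝ) (ω : ℕ → X) : ℕ∞ :=
  ⨅ i, Ti P d Δ α i ω

/-- Expected value of an `ℕ∞`-valued stopping time. -/
def ExpT [MeasurableSpace X] (μ : Measure (ℕ → X)) (T : (ℕ → X) → ℕ∞) : ℝ :=
  (∫⁻ ω, ((T ω : ℕ∞) : ℝ≥0∞) ∂μ).toReal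

/-- Thresholds in the binary non-aware setting. -/
def gammaNA (K : ℕ) (α : ℝ) (n : ℕ) : ℝ :=
  Real.log (Cζ / α) / n + 1 / (n : ℝ) ^ (0.85 : ℝ) + (K : ℝ) * Real.log ((n : ℝ) + 1) / n

/-- Admissible common channels in the non-aware setting. -/
def AdmNA [Fintype X] (d : (X → ℝ) → (X → ℝ) → ℝ) (Δ : ℝ) (P0 P1 : X → ℝ) :
    Set (X → X → ℝ) :=
  {A | RowStoch A ∧ max (d P0 (push P0 A)) (d P1 (push P1 A)) ≤ Δ ∧
    (∀ y, 0 < push P0 A y) ∧ ∀ y, 0 < push P1 A y}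

/-- The statistic `S_n` in the non-aware setting. -/
def Sstat [Fintype X] [DecidableEq X] (P0 P1 : X → ℝ)
    (d : (X → ℝ) → (X → ℝ) → ℝ) (Δ : ℝ) (n : ℕ) (ω : ℕ → X) : ℝ :=
  sInf {r | ∃ A ∈ AdmNA d Δ P0 P1,
    r = max (KL (emp n ω) (push P0 A)) (KL (emp n ω) (push P1 A))}

/-- Stopping time `τ*` of the non-aware test. -/
def tauNA [Fintype X] [DecidableEq X] (P0 P1 : X → ℝ)
    (d : (X → ℝ) → (X → ℝ) → ℝ) (Δ α : ℝ) (ω : ℕ → X) : ℕ∞ :=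
  sInf {t : ℕ∞ | ∃ n : ℕ, t = (n : ℕ∞) ∧ 1 ≤ n ∧
    gammaNA (Fintype.card X) α n ≤ Sstat P0 P1 d Δ n ω}

/-- A sequential test: a stopping time together with an `F_T`-measurable decision,
expressed functionally (the stopping decision and the final decision depend only on
the samples observed up to the stopping time). -/
structure SeqTest (X : Type*) (M : ℕ) where
  T : (ℕ → X) → ℕ∞
  dec : (ℕ → X) → Fin M
  adapted : ∀ ω ω' : ℕ → X, ∀ n : ℕ, T ω = (n : ℕ∞) →
    (∀ k < n, ω k = ω' k) → T ω' = (n : ℕ∞) ∧ dec ω' = dec ω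

/-- Membership in the decision maker's strategy set `𝒮_D(α)`: all error
probabilities are at most `α` whatever admissible strategy the adversary uses,
and the expected stopping times are finite. -/
def InSD [Fintype X] [MeasurableSpace X] {M : ℕ} (P : Fin M → X → ℝ)
    (d : (X → ℝ) → (X → ℝ) → ℝ) (Δ α : ℝ) (Φ : SeqTest X M) : Prop :=
  ∀ B : Fin M → X → X → ℝ, (∀ i, B i ∈ Adm d Δ (P i)) →
    ∀ ν : Fin M → Measure (ℕ → X), (∀ i, IsIID (ν i) (push (P i) (B i))) →
      ∀ i, ν i {ω | Φ.dec ω ≠ i} ≤ ENNReal.ofReal α ∧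
        ∫⁻ ω, ((Φ.T ω : ℕ∞) : ℝ≥0∞) ∂(ν i) < ⊤


/-!
Under `H_i` the empirical distribution of the first `n` samples is within `δ` of the
output distribution `Q_i = P_i Ã_i` in every coordinate, except on an event of probability
at most `2 |𝒳| e^{-δ² n / 4}` (Chernoff). Compactness of the admissible channels gives a
uniform lower bound `c > 0` on all admissible output distributions; KL separation by `ε`
then forces a coordinate gap `c ε / |𝒳|` between `Q_i` and every `P_j A_j`, so a close
empirical distribution has `Z_i^{(n)} ≥ θ > 0`. As `γ_n ≤ θ` once `n` exceeds a constant
plus a multiple of `log (1/α)`, `P_i (T* > n)` decays exponentially from there on. Hence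
`T* / log (1/α)` has an exponential tail uniformly in `α ≤ 1/2`, and its truncated means
tend to `0` uniformly.
-/

section Distributions

variable [Fintype X] {p q r : X → ℝ}

theorem IsDist.le_one (hp : IsDist p) (a : X) : p a ≤ 1 :=
  hp.2 ▸ Finset.single_le_sum (fun x _ => hp.1 x) (Finset.mem_univ a)

theorem IsDist.nonempty (hp : IsDist p) : Nonempty X := by
  by_contra h
  have := hp.2
  simp_all

theorem IsDist.push (hp : IsDist p) {A : X → X → ℝ} (hA : RowStoch A) : IsDist (push p A) := by
  refine ⟨fun y => Finset.sum_nonneg fun x _ => mul_nonneg (hp.1 x) (hA.1 x y), ?_⟩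
  simp only [AHT.push]
  rw [Finset.sum_comm]
  simp only [← Finset.mul_sum, hA.2, mul_one, hp.2]

theorem isDist_emp [DecidableEq X] {n : ℕ} (hn : 0 < n) (ω : ℕ → X) : IsDist (emp n ω) := by
  refine ⟨fun a => by unfold emp; positivity, ?_⟩
  have hcount : ∑ a, ((Finset.range n).filter fun k => ω k = a).card = n := by
    simp only [Finset.card_filter]
    rw [Finset.sum_comm]
    simp
  simp only [emp, ← Finset.sum_div]
  rw [← Nat.cast_sum, hcount, div_self (by positivity)]

theorem KL_le_sum_abs_sub_div (hp : IsDist p) {c : ℝ} (hc : 0 < c) (hq : ∀ a, c ≤ q a) :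
    KL p q ≤ ∑ a, |p a - q a| / c := by
  refine Finset.sum_le_sum fun a _ => ?_
  have hqa : 0 < q a := hc.trans_le (hq a)
  rcases (hp.1 a).eq_or_lt with h0 | hpa
  · simp [← h0]
    positivity
  calc p a * Real.log (p a / q a) ≤ p a * (p a / q a - 1) := by
        gcongr
        exact Real.log_le_sub_one_of_pos (div_pos hpa hqa)
    _ = p a * (p a - q a) / q a := by field_simp
    _ ≤ p a * |p a - q a| / q a := by gcongr; exact le_abs_self _
    _ ≤ |p a - q a| / q a := by gcongr; exact mul_le_of_le_one_left (abs_nonneg _) (hp.le_one a)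
    _ ≤ |p a - q a| / c := by gcongr; exact hq a

theorem two_mul_sub_le_mul_log_div {u v : ℝ} (hu : 0 < u) (hv : 0 < v) :
    2 * (u ^ 2 - u * v) ≤ u ^ 2 * Real.log (u ^ 2 / v ^ 2) := by
  have h := Real.one_sub_inv_le_log_of_pos (div_pos hu hv)
  rw [inv_div] at h
  have h2 : u ^ 2 * (1 - v / u) = u ^ 2 - u * v := by field_simp
  rw [← div_pow, Real.log_pow]
  push_cast
  nlinarith [mul_le_mul_of_nonneg_left h (sq_nonneg u)]

/-- Termwise `p log (p / q) ≥ 2 (p - √(p q))` by `log x ≤ x - 1`; summing,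
`KL p q ≥ 2 (1 - ∑ √(p q)) = ∑ (√p - √q)²`. -/
theorem sum_sq_sqrt_sub_le_KL (hp : IsDist p) (hq : IsDist q) (hq0 : ∀ a, 0 < q a) :
    ∑ a, (√(p a) - √(q a)) ^ 2 ≤ KL p q := by
  have hterm : ∀ a, (√(p a) - √(q a)) ^ 2 + (p a - q a)
      ≤ p a * Real.log (p a / q a) := by
    intro a
    have hsp := Real.sq_sqrt (hp.1 a)
    have hsq := Real.sq_sqrt (hq0 a).le
    rcases (hp.1 a).eq_or_lt with h0 | hpa
    · simp [← h0, hsq]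
    have h := two_mul_sub_le_mul_log_div (Real.sqrt_pos.2 hpa) (Real.sqrt_pos.2 (hq0 a))
    rw [hsp, hsq] at h
    nlinarith
  have hsum := Finset.sum_le_sum fun a (_ : a ∈ Finset.univ) => hterm a
  rwa [Finset.sum_add_distrib, Finset.sum_sub_distrib, hp.2, hq.2, sub_self, add_zero] at hsum

theorem sq_sub_div_four_le_KL (hp : IsDist p) (hq : IsDist q) (hq0 : ∀ a, 0 < q a) (a : X) :
    (p a - q a) ^ 2 / 4 ≤ KL p q := by
  have hsp := Real.sq_sqrt (hp.1 a)
  have hsq := Real.sq_sqrt (hq0 a).le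
  have hsp1 : √(p a) ≤ 1 := Real.sqrt_le_one.2 (hp.le_one a)
  have hsq1 : √(q a) ≤ 1 := Real.sqrt_le_one.2 (hq.le_one a)
  have hfactor : (p a - q a) ^ 2 = (√(p a) - √(q a)) ^ 2 * (√(p a) + √(q a)) ^ 2 := by
    rw [← mul_pow]; congr 1; nlinarith
  have hsum_le : (√(p a) + √(q a)) ^ 2 ≤ 4 := by
    nlinarith [Real.sqrt_nonneg (p a), Real.sqrt_nonneg (q a)]
  have hsingle : (√(p a) - √(q a)) ^ 2 ≤ ∑ b, (√(p b) - √(q b)) ^ 2 :=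
    Finset.single_le_sum (f := fun b => (√(p b) - √(q b)) ^ 2) (fun b _ => sq_nonneg _)
      (Finset.mem_univ a)
  have := sum_sq_sqrt_sub_le_KL hp hq hq0
  nlinarith [sq_nonneg (√(p a) - √(q a))]

theorem exists_le_abs_sub_of_le_KL (hq : IsDist q) {c ε : ℝ} (hc : 0 < c)
    (hr : ∀ a, c ≤ r a) (hKL : ε ≤ KL q r) : ∃ a, c * ε / Fintype.card X ≤ |q a - r a| := by
  have := hq.nonempty
  by_contra! h
  have hlt : ∑ a, |q a - r a| / c < ∑ _a : X, c * ε / Fintype.card X / c :=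
    Finset.sum_lt_sum_of_nonempty Finset.univ_nonempty fun a _ => by gcongr; exact h a
  have hK : (Fintype.card X : ℝ) ≠ 0 := by positivity
  rw [Finset.sum_const, Finset.card_univ, nsmul_eq_mul] at hlt
  field_simp at hlt
  linarith [KL_le_sum_abs_sub_div hq hc hr]

end Distributions

section Chernoff

variable [Fintype X] {Q f : X → ℝ}

theorem sum_mul_exp_le (hQ : IsDist Q) (hf : ∀ x, |f x| ≤ 1) {l : ℝ} (hl0 : 0 ≤ l)
    (hl1 : l ≤ 1) (t : ℝ) :
    ∑ x, Q x * Real.exp (l * (f x - (∑ y, Q y * f y + t))) ≤ Real.exp (l ^ 2 - l * t) := by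
  set m := ∑ y, Q y * f y
  have hpoint : ∀ x, Real.exp (l * f x) ≤ 1 + l * f x + l ^ 2 := by
    intro x
    have hf2 : f x ^ 2 ≤ 1 := sq_le_one_iff_abs_le_one _ |>.2 (hf x)
    have hlf : |l * f x| ≤ 1 := by
      rw [abs_mul, abs_of_nonneg hl0]
      nlinarith [abs_nonneg (f x), hf x]
    have h := (abs_le.1 (Real.abs_exp_sub_one_sub_id_le hlf)).2
    nlinarith [sq_nonneg l]
  have hmgf : ∑ x, Q x * Real.exp (l * f x) ≤ Real.exp (l * m + l ^ 2) :=
    calc ∑ x, Q x * Real.exp (l * f x) ≤ ∑ x, Q x * (1 + l * f x + l ^ 2) :=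
          Finset.sum_le_sum fun x _ => mul_le_mul_of_nonneg_left (hpoint x) (hQ.1 x)
      _ = (l * m + l ^ 2) + 1 := by
          have h : ∀ x, Q x * (1 + l * f x + l ^ 2) = Q x * (1 + l ^ 2) + l * (Q x * f x) :=
            fun x => by ring
          rw [Finset.sum_congr rfl fun x _ => h x, Finset.sum_add_distrib, ← Finset.sum_mul,
            ← Finset.mul_sum, hQ.2]
          ring
      _ ≤ Real.exp (l * m + l ^ 2) := Real.add_one_le_exp _
  calc ∑ x, Q x * Real.exp (l * (f x - (m + t)))
      = (∑ x, Q x * Real.exp (l * f x)) * Real.exp (-(l * (m + t))) := by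
        rw [Finset.sum_mul]
        refine Finset.sum_congr rfl fun x _ => ?_
        rw [mul_assoc, ← Real.exp_add]
        ring_nf
    _ ≤ Real.exp (l * m + l ^ 2) * Real.exp (-(l * (m + t))) := by gcongr
    _ = Real.exp (l ^ 2 - l * t) := by rw [← Real.exp_add]; ring_nf

/-- Chernoff: on the filtered vectors `∏ Q (v k)` is at most
`∏ Q (v k) * exp (t / 2 * (f (v k) - m - t))`, and the sum of the latter over all vectors
factorizes. -/
theorem sum_filter_prod_le_exp (hQ : IsDist Q) (hf : ∀ x, |f x| ≤ 1) {t : ℝ} (ht0 : 0 ≤ t)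
    (ht2 : t ≤ 2) (n : ℕ) :
    ∑ v ∈ Finset.univ.filter
        (fun v : Fin n → X => (∑ x, Q x * f x + t) * n ≤ ∑ k, f (v k)),
      ∏ k, Q (v k) ≤ Real.exp (-(t ^ 2 / 4) * n) := by
  set m := ∑ x, Q x * f x
  set g : X → ℝ := fun x => Q x * Real.exp (t / 2 * (f x - (m + t)))
  have hg0 : ∀ x, 0 ≤ g x := fun x => mul_nonneg (hQ.1 x) (Real.exp_nonneg _)
  have hterm : ∀ v ∈ Finset.univ.filter (fun v : Fin n → X => (m + t) * n ≤ ∑ k, f (v k)),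
      ∏ k, Q (v k) ≤ ∏ k, g (v k) := by
    intro v hv
    have hexp : 0 ≤ ∑ k, t / 2 * (f (v k) - (m + t)) := by
      rw [← Finset.mul_sum, Finset.sum_sub_distrib, Finset.sum_const, Finset.card_univ,
        Fintype.card_fin, nsmul_eq_mul]
      have := (Finset.mem_filter.1 hv).2
      exact mul_nonneg (by positivity) (by linarith)
    simp only [g, Finset.prod_mul_distrib, ← Real.exp_sum]
    exact le_mul_of_one_le_right (Finset.prod_nonneg fun k _ => hQ.1 (v k))
      (Real.one_le_exp hexp)
  calc _ ≤ ∑ v ∈ Finset.univ.filter (fun v : Fin n → X => (m + t) * n ≤ ∑ k, f (v k)),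
          ∏ k, g (v k) := Finset.sum_le_sum hterm
    _ ≤ ∑ v : Fin n → X, ∏ k, g (v k) :=
        Finset.sum_le_sum_of_subset_of_nonneg (Finset.filter_subset _ _)
          fun v _ _ => Finset.prod_nonneg fun k _ => hg0 (v k)
    _ = (∑ x, g x) ^ n := by
        rw [← Fintype.prod_sum (fun _ : Fin n => g), Finset.prod_const, Finset.card_univ,
          Fintype.card_fin]
    _ ≤ Real.exp ((t / 2) ^ 2 - t / 2 * t) ^ n :=
        pow_le_pow_left₀ (Finset.sum_nonneg fun x _ => hg0 x)
          (sum_mul_exp_le hQ hf (by positivity) (by linarith) t) n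
    _ = Real.exp (-(t ^ 2 / 4) * n) := by
        rw [← Real.exp_nat_mul]
        ring_nf

variable [MeasurableSpace X] {μ : Measure (ℕ → X)}

theorem IsIID.measure_le_sum_prod (hμ : IsIID μ Q) (hQ : ∀ x, 0 ≤ Q x) {n : ℕ}
    (F : Finset (Fin n → X)) :
    μ {ω | (fun k : Fin n => ω k) ∈ F} ≤ ENNReal.ofReal (∑ v ∈ F, ∏ k, Q (v k)) :=
  calc μ {ω | (fun k : Fin n => ω k) ∈ F}
      ≤ μ (⋃ v ∈ F, {ω | ∀ k : Fin n, ω k = v k}) :=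
        measure_mono fun _ hω => Set.mem_biUnion hω fun _ => rfl
    _ ≤ ∑ v ∈ F, μ {ω | ∀ k : Fin n, ω k = v k} := measure_biUnion_finset_le _ _
    _ = ∑ v ∈ F, ENNReal.ofReal (∏ k, Q (v k)) := Finset.sum_congr rfl fun v _ => hμ.2 n v
    _ = ENNReal.ofReal (∑ v ∈ F, ∏ k, Q (v k)) :=
        (ENNReal.ofReal_sum_of_nonneg fun _ _ => Finset.prod_nonneg fun _ _ => hQ _).symm

theorem IsIID.measure_le_sum_le_exp (hμ : IsIID μ Q) (hQ : IsDist Q) (hf : ∀ x, |f x| ≤ 1)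
    {t : ℝ} (ht0 : 0 ≤ t) (ht2 : t ≤ 2) (n : ℕ) :
    μ {ω | (∑ x, Q x * f x + t) * n ≤ ∑ k ∈ Finset.range n, f (ω k)}
      ≤ ENNReal.ofReal (Real.exp (-(t ^ 2 / 4) * n)) := by
  refine (measure_mono fun ω hω => ?_).trans ((hμ.measure_le_sum_prod hQ.1 _).trans
    (ENNReal.ofReal_le_ofReal (sum_filter_prod_le_exp hQ hf ht0 ht2 n)))
  simpa [Fin.sum_univ_eq_sum_range (fun k => f (ω k)) n] using hω

theorem IsIID.measure_exists_le_abs_emp_sub_le [DecidableEq X] (hμ : IsIID μ Q)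
    (hQ : IsDist Q) {δ : ℝ} (hδ0 : 0 ≤ δ) (hδ2 : δ ≤ 2) {n : ℕ} (hn : 0 < n) :
    μ {ω | ∃ a, δ ≤ |emp n ω a - Q a|}
      ≤ ENNReal.ofReal (2 * Fintype.card X * Real.exp (-(δ ^ 2 / 4) * n)) := by
  set ind : X → X → ℝ := fun a x => if x = a then 1 else 0
  have hind : ∀ a x, |ind a x| ≤ 1 := fun a x => by by_cases h : x = a <;> simp [ind, h]
  have hmean : ∀ a, ∑ x, Q x * ind a x = Q a := fun a => by simp [ind]
  have hemp : ∀ a ω, emp n ω a * n = ∑ k ∈ Finset.range n, ind a (ω k) := fun a ω => by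
    simp only [emp, ind, Finset.sum_boole]
    exact div_mul_cancel₀ _ (by positivity)
  set E : X → Set (ℕ → X) := fun a =>
    {ω | (∑ x, Q x * ind a x + δ) * n ≤ ∑ k ∈ Finset.range n, ind a (ω k)} ∪
      {ω | (∑ x, Q x * -ind a x + δ) * n ≤ ∑ k ∈ Finset.range n, -ind a (ω k)}
  have hsub : {ω | ∃ a, δ ≤ |emp n ω a - Q a|} ⊆ ⋃ a, E a := by
    rintro ω ⟨a, ha⟩
    refine Set.mem_iUnion.2 ⟨a, ?_⟩
    have hnpos : (0 : ℝ) < n := Nat.cast_pos.2 hn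
    simp only [E, Set.mem_union, Set.mem_ofPred_eq, mul_neg, Finset.sum_neg_distrib, hmean,
      ← hemp]
    rcases le_abs'.1 ha with h | h
    · right; nlinarith
    · left; nlinarith
  have hE : ∀ a, μ (E a) ≤ ENNReal.ofReal (2 * Real.exp (-(δ ^ 2 / 4) * n)) := fun a =>
    calc μ (E a) ≤ _ := measure_union_le _ _
      _ ≤ ENNReal.ofReal (Real.exp (-(δ ^ 2 / 4) * n))
          + ENNReal.ofReal (Real.exp (-(δ ^ 2 / 4) * n)) :=
        add_le_add (hμ.measure_le_sum_le_exp hQ (hind a) hδ0 hδ2 n)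
          (hμ.measure_le_sum_le_exp hQ (fun x => (abs_neg _).le.trans (hind a x)) hδ0 hδ2 n)
      _ = _ := by rw [← ENNReal.ofReal_add (by positivity) (by positivity), two_mul]
  calc μ {ω | ∃ a, δ ≤ |emp n ω a - Q a|} ≤ ∑ a, μ (E a) :=
        (measure_mono hsub).trans (measure_iUnion_fintype_le _ _)
    _ ≤ ∑ _a : X, ENNReal.ofReal (2 * Real.exp (-(δ ^ 2 / 4) * n)) :=
        Finset.sum_le_sum fun a _ => hE a
    _ = _ := by
        rw [← ENNReal.ofReal_sum_of_nonneg fun _ _ => by positivity, Finset.sum_const,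
          Finset.card_univ, nsmul_eq_mul]
        ring_nf

end Chernoff

section Tails

variable {Ω : Type*} [MeasurableSpace Ω]

theorem ofReal_le_tsum_ite_le (x : ℝ) :
    ENNReal.ofReal x ≤ ∑' m : ℕ, if (m : ℝ) ≤ x then (1 : ℝ≥0∞) else 0 := by
  rcases le_or_gt x 0 with hx | hx
  · simp [ENNReal.ofReal_of_nonpos hx]
  calc ENNReal.ofReal x ≤ ((⌊x⌋₊ + 1 : ℕ) : ℝ≥0∞) := by
        rw [← ENNReal.ofReal_natCast]
        exact ENNReal.ofReal_le_ofReal (by push_cast; exact (Nat.lt_floor_add_one x).le)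
    _ = ∑ m ∈ Finset.range (⌊x⌋₊ + 1), if (m : ℝ) ≤ x then (1 : ℝ≥0∞) else 0 := by
        rw [Finset.sum_congr rfl fun m hm => if_pos ((Nat.le_floor_iff hx.le).1
          (Nat.lt_succ_iff.1 (Finset.mem_range.1 hm)))]
        simp
    _ ≤ _ := ENNReal.sum_le_tsum _

theorem ofReal_integral_le_tsum_measure_le {ν : Measure Ω} {f : Ω → ℝ} (hf : ∀ ω, 0 ≤ f ω) :
    ENNReal.ofReal (∫ ω, f ω ∂ν) ≤ ∑' m : ℕ, ν {ω | (m : ℝ) ≤ f ω} := by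
  by_cases hfi : Integrable f ν
  swap
  · simp [integral_undef hfi]
  have hnull : ∀ m : ℕ, NullMeasurableSet {ω | (m : ℝ) ≤ f ω} ν :=
    fun m => nullMeasurableSet_le aemeasurable_const hfi.aemeasurable
  rw [ofReal_integral_eq_lintegral_ofReal hfi (Eventually.of_forall hf)]
  calc ∫⁻ ω, ENNReal.ofReal (f ω) ∂ν
      ≤ ∫⁻ ω, ∑' m : ℕ, {ω | (m : ℝ) ≤ f ω}.indicator 1 ω ∂ν :=
        lintegral_mono fun ω => by
          simpa [Set.indicator_apply] using ofReal_le_tsum_ite_le (f ω)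
    _ = ∑' m : ℕ, ν {ω | (m : ℝ) ≤ f ω} := by
        rw [lintegral_tsum (f := fun m : ℕ => {ω | (m : ℝ) ≤ f ω}.indicator 1)
          fun m => aemeasurable_one.indicator₀ (hnull m)]
        exact tsum_congr fun m => lintegral_indicator_one₀ (hnull m)

theorem restrict_setOf_le_apply_le (ν : Measure Ω) (f : Ω → ℝ) (η t : ℝ) :
    ν.restrict {ω | η ≤ f ω} {ω | t ≤ f ω} ≤ ν {ω | max t η ≤ f ω} := by
  rcases le_total t η with h | h
  · rw [max_eq_right h]
    exact (measure_mono (Set.subset_univ _)).trans (Measure.restrict_apply_univ _).le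
  · rw [max_eq_left h]
    exact Measure.le_iff'.1 Measure.restrict_le_self _

/-- Integer layer cake: the integral is at most `∑ m, ν {max m η ≤ f}`, and
`max m η ≥ (m + η) / 2`. -/
theorem setIntegral_le_of_measure_le_exp {ν : Measure Ω} {f : Ω → ℝ} (hf : ∀ ω, 0 ≤ f ω)
    {C a η : ℝ} (hC : 0 ≤ C) (ha : 0 < a)
    (htail : ∀ t, η ≤ t → ν {ω | t ≤ f ω} ≤ ENNReal.ofReal (C * Real.exp (-a * t))) :
    ∫ ω in {ω | η ≤ f ω}, f ω ∂ν ≤ C * Real.exp (-a * η / 2) / (1 - Real.exp (-a / 2)) := by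
  set r := Real.exp (-a / 2)
  have hr1 : r < 1 := Real.exp_lt_one_iff.2 (by linarith)
  have hterm : ∀ m : ℕ, C * Real.exp (-a * max (m : ℝ) η) ≤ C * Real.exp (-a * η / 2) * r ^ m := by
    intro m
    rw [← Real.exp_nat_mul, mul_assoc, ← Real.exp_add]
    gcongr
    nlinarith [le_max_left (m : ℝ) η, le_max_right (m : ℝ) η]
  have hsum : HasSum (fun m : ℕ => C * Real.exp (-a * η / 2) * r ^ m)
      (C * Real.exp (-a * η / 2) / (1 - r)) :=
    (hasSum_geometric_of_lt_one (Real.exp_nonneg _) hr1).mul_left _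
  rw [← ENNReal.ofReal_le_ofReal_iff (div_nonneg (by positivity) (by linarith))]
  calc ENNReal.ofReal (∫ ω in {ω | η ≤ f ω}, f ω ∂ν)
      ≤ ∑' m : ℕ, ν.restrict {ω | η ≤ f ω} {ω | (m : ℝ) ≤ f ω} :=
        ofReal_integral_le_tsum_measure_le hf
    _ ≤ ∑' m : ℕ, ENNReal.ofReal (C * Real.exp (-a * max (m : ℝ) η)) :=
        ENNReal.tsum_le_tsum fun m =>
          (restrict_setOf_le_apply_le ν f η m).trans (htail _ (le_max_right _ _))
    _ ≤ ∑' m : ℕ, ENNReal.ofReal (C * Real.exp (-a * η / 2) * r ^ m) :=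
        ENNReal.tsum_le_tsum fun m => ENNReal.ofReal_le_ofReal (hterm m)
    _ = ENNReal.ofReal (C * Real.exp (-a * η / 2) / (1 - r)) := by
        rw [← ENNReal.ofReal_tsum_of_nonneg (fun m => by positivity) hsum.summable,
          hsum.tsum_eq]

theorem measure_le_le_of_measure_lt_le {ν : Measure Ω} (g : Ω → ℕ) {C a N : ℝ} (hC : 0 ≤ C)
    (ha : 0 ≤ a) (hN : 0 ≤ N)
    (h : ∀ n : ℕ, N ≤ n → ν {ω | n < g ω} ≤ ENNReal.ofReal (C * Real.exp (-a * n)))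
    {r : ℝ} (hr : N + 1 ≤ r) :
    ν {ω | r ≤ g ω} ≤ ENNReal.ofReal (C * Real.exp a * Real.exp (-a * r)) := by
  have hceil : 1 ≤ ⌈r⌉₊ := Nat.ceil_pos.2 (by linarith)
  have hn : r - 1 ≤ ((⌈r⌉₊ - 1 : ℕ) : ℝ) := by
    rw [Nat.cast_sub hceil, Nat.cast_one]
    linarith [Nat.le_ceil r]
  refine (measure_mono fun ω (hω : r ≤ g ω) => ?_).trans
    ((h (⌈r⌉₊ - 1) (by linarith)).trans (ENNReal.ofReal_le_ofReal ?_))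
  · have := Nat.ceil_le.2 hω
    show ⌈r⌉₊ - 1 < g ω
    omega
  · rw [mul_assoc, ← Real.exp_add]
    gcongr
    nlinarith

end Tails

theorem tendsto_sSup_of_nonneg_of_le {ι : Type*} {p : ι → Prop} (hp : ∃ α, p α)
    {F : ι → ℝ → ℝ} {B : ℝ → ℝ} (hB : Tendsto B atTop (𝓝 0))
    (hF0 : ∀ α η, p α → 0 ≤ F α η) (hFB : ∀ᶠ η in atTop, ∀ α, p α → F α η ≤ B η) :
    Tendsto (fun η => sSup {e | ∃ α, p α ∧ e = F α η}) atTop (𝓝 0) := by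
  refine tendsto_of_tendsto_of_tendsto_of_le_of_le' tendsto_const_nhds hB
    (Eventually.of_forall fun η => Real.sSup_nonneg ?_) (hFB.mono fun η h => Real.sSup_le ?_ ?_)
  · rintro _ ⟨α, hα, rfl⟩
    exact hF0 α η hα
  · rintro _ ⟨α, hα, rfl⟩
    exact h α hα
  · obtain ⟨α, hα⟩ := hp
    exact (hF0 α η hα).trans (h α hα)

theorem gammaTh_le_add_log (K M : ℕ) {β : ℝ} (hβ0 : 0 < β) (hβ1 : β ≤ 1) (n : ℕ) :
    gammaTh K M β n ≤ gammaTh K M 1 n + Real.log (1 / β) / n := by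
  have hlog : Real.log (Cζ / β) ≤ Real.log (Cζ / 1) + Real.log (1 / β) := by
    rcases eq_or_ne Cζ 0 with h | h
    · simpa [h] using Real.log_nonneg (one_le_inv_iff₀.2 ⟨hβ0, hβ1⟩)
    · rw [div_one, ← Real.log_mul h (by positivity), mul_one_div]
  have := div_le_div_of_nonneg_right hlog (Nat.cast_nonneg (α := ℝ) n)
  rw [add_div] at this
  simp only [gammaTh]
  linarith

theorem tendsto_gammaTh (K M : ℕ) (α : ℝ) : Tendsto (gammaTh K M α) atTop (𝓝 0) := by
  have hlog : Tendsto (fun n : ℕ => Real.log ((n : ℝ) + 1) / n) atTop (𝓝 0) := by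
    refine ((Real.tendsto_pow_log_div_mul_add_atTop 1 (-1) 1 one_ne_zero).comp
      (tendsto_atTop_add_const_right _ 1 tendsto_natCast_atTop_atTop)).congr fun n => ?_
    simp
  have hpow : Tendsto (fun n : ℕ => 1 / (n : ℝ) ^ (0.85 : ℝ)) atTop (𝓝 0) := by
    refine ((tendsto_rpow_neg_atTop (by norm_num : (0 : ℝ) < 0.85)).comp
      tendsto_natCast_atTop_atTop).congr fun n => ?_
    simp [Real.rpow_neg (Nat.cast_nonneg n)]
  have h := ((tendsto_const_div_atTop_nhds_zero_nat (Real.log (Cζ / α))).add hpow).add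
    ((hlog.const_mul (K : ℝ)).add (tendsto_const_div_atTop_nhds_zero_nat (Real.log ((M : ℝ) - 1))))
  simp only [add_zero, mul_zero] at h
  refine h.congr fun n => ?_
  simp only [gammaTh, add_div, mul_div_assoc]

section SequentialTest

variable [Fintype X] {d : (X → ℝ) → (X → ℝ) → ℝ} {Δ : ℝ}

theorem exists_pos_le_push {ι : Type*} [Finite ι] {P : ι → X → ℝ}
    (hK : IsCompact {A : ι → X → X → ℝ | ∀ i, A i ∈ Adm d Δ (P i)})
    {A₀ : ι → X → X → ℝ} (hA₀ : ∀ i, A₀ i ∈ Adm d Δ (P i)) :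
    ∃ c, 0 < c ∧ ∀ j y, ∀ A ∈ Adm d Δ (P j), c ≤ push (P j) A y := by
  classical
  have hbound : ∀ jy : ι × X,
      ∀ᶠ c in 𝓝[>] (0 : ℝ), ∀ A ∈ Adm d Δ (P jy.1), c ≤ push (P jy.1) A jy.2 := by
    rintro ⟨j, y⟩
    obtain ⟨c, hc, hle⟩ := hK.exists_forall_le' (f := fun A => push (P j) (A j) y)
      (Continuous.continuousOn (by unfold push; fun_prop)) fun A hA => (hA j).2.2 y
    filter_upwards [eventually_nhdsWithin_of_eventually_nhds (eventually_le_nhds hc)]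
      with c' hc' A hA
    have hupdate : Function.update A₀ j A ∈ {A : ι → X → X → ℝ | ∀ i, A i ∈ Adm d Δ (P i)} := by
      intro i
      rcases eq_or_ne i j with rfl | h
      · simpa using hA
      · simpa [h] using hA₀ i
    simpa using hc'.trans (hle _ hupdate)
  obtain ⟨c, hc, hc0⟩ := ((eventually_all.2 hbound).and self_mem_nhdsWithin).exists
  exact ⟨c, hc0, fun j y => hc (j, y)⟩

variable [DecidableEq X] {M : ℕ} {P : Fin M → X → ℝ}

theorem Tstar_le_of_gammaTh_le_Zstat {α : ℝ} (i : Fin M) {n : ℕ} (hn : 1 ≤ n) {ω : ℕ → X}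
    (h : gammaTh (Fintype.card X) M α n ≤ Zstat P d Δ i n ω) : Tstar P d Δ α ω ≤ n :=
  (iInf_le _ i).trans (sInf_le ⟨n, rfl, hn, h⟩)

/-- By `hsep`, the output distribution under `H_i` is `c ε / |X|`-far from every admissible
output distribution under `H_j` in some coordinate, so the empirical distribution is still
`c ε / (2 |X|)`-far from it there. -/
theorem le_Zstat_of_abs_emp_sub_lt (hM : 2 ≤ M) (hP : ∀ i, IsDist (P i)) {c ε : ℝ}
    (hc : 0 < c) (hε : 0 ≤ ε) (hc_le : ∀ j y, ∀ A ∈ Adm d Δ (P j), c ≤ push (P j) A y)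
    (hsep : ∀ i j, i ≠ j → ∀ Ai ∈ Adm d Δ (P i), ∀ Aj ∈ Adm d Δ (P j),
      ε ≤ KL (push (P i) Ai) (push (P j) Aj))
    {A₀ : Fin M → X → X → ℝ} (hA₀ : ∀ i, A₀ i ∈ Adm d Δ (P i)) {i : Fin M} {n : ℕ}
    (hn : 0 < n) {ω : ℕ → X}
    (hclose : ∀ a, |emp n ω a - push (P i) (A₀ i) a| < c * ε / Fintype.card X / 2) :
    (c * ε / Fintype.card X / 2) ^ 2 / 4 ≤ Zstat P d Δ i n ω := by
  obtain ⟨j₀, hj₀⟩ := Fintype.exists_ne_of_one_lt_card (by rw [Fintype.card_fin]; omega) i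
  refine le_csInf ⟨_, j₀, hj₀, A₀ j₀, hA₀ j₀, rfl⟩ ?_
  rintro _ ⟨j, hj, A, hA, rfl⟩
  obtain ⟨a, ha⟩ := exists_le_abs_sub_of_le_KL ((hP i).push (hA₀ i).1) hc
    (fun y => hc_le j y A hA) (hsep i j hj.symm _ (hA₀ i) A hA)
  have hgap : c * ε / Fintype.card X / 2 ≤ |emp n ω a - push (P j) A a| := by
    have := abs_sub_le (push (P i) (A₀ i) a) (emp n ω a) (push (P j) A a)
    rw [abs_sub_comm (push (P i) (A₀ i) a) (emp n ω a)] at this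
    linarith [hclose a]
  calc (c * ε / Fintype.card X / 2) ^ 2 / 4 ≤ |emp n ω a - push (P j) A a| ^ 2 / 4 := by
        gcongr
    _ = (emp n ω a - push (P j) A a) ^ 2 / 4 := by rw [sq_abs]
    _ ≤ KL (emp n ω) (push (P j) A) :=
        sq_sub_div_four_le_KL (isDist_emp hn ω) ((hP j).push hA.1) hA.2.2 a

variable [MeasurableSpace X]

/-- With `c` from `exists_pos_le_push` and `s = c ε / (2 |X|)`, take `θ = s² / 8`: then
`γ_n ≤ s² / 4 ≤ Z_i^{(n)}`, hence `T* ≤ n`, unless the empirical distribution deviates by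
`min s 2` in some coordinate. -/
theorem exists_measure_lt_Tstar_le (hM : 2 ≤ M) (hP : ∀ i, IsDist (P i))
    (hK : IsCompact {A : Fin M → X → X → ℝ | ∀ i, A i ∈ Adm d Δ (P i)}) {ε : ℝ} (hε : 0 < ε)
    (hsep : ∀ i j, i ≠ j → ∀ Ai ∈ Adm d Δ (P i), ∀ Aj ∈ Adm d Δ (P j),
      ε ≤ KL (push (P i) Ai) (push (P j) Aj))
    {A₀ : Fin M → X → X → ℝ} (hA₀ : ∀ i, A₀ i ∈ Adm d Δ (P i)) {i : Fin M}
    {ν : Measure (ℕ → X)} (hν : IsIID ν (push (P i) (A₀ i))) :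
    ∃ θ > 0, ∃ C κ : ℝ, 0 ≤ C ∧ 0 < κ ∧ ∃ N : ℕ, ∀ β, 0 < β → β ≤ 1 → ∀ n : ℕ,
      N + Real.log (1 / β) / θ ≤ n →
        ν {ω | n < (Tstar P d Δ β ω).toNat} ≤ ENNReal.ofReal (C * Real.exp (-κ * n)) := by
  obtain ⟨c, hc, hc_le⟩ := exists_pos_le_push hK hA₀
  set s := c * ε / Fintype.card X / 2
  have hs : 0 < s := by
    have := (hP i).nonempty
    positivity
  obtain ⟨N, hN⟩ := eventually_atTop.1
    ((tendsto_gammaTh (Fintype.card X) M 1).eventually_lt_const (by positivity : 0 < s ^ 2 / 8))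
  refine ⟨s ^ 2 / 8, by positivity, 2 * Fintype.card X, min s 2 ^ 2 / 4, by positivity,
    by positivity, N + 1, fun β hβ0 hβ1 n hn => ?_⟩
  have hlog : 0 ≤ Real.log (1 / β) / (s ^ 2 / 8) :=
    div_nonneg (Real.log_nonneg (one_le_one_div hβ0 hβ1)) (by positivity)
  have hNn : N + 1 ≤ n := by exact_mod_cast (le_add_of_nonneg_right hlog).trans hn
  have hnpos : (0 : ℝ) < n := by exact_mod_cast (show 0 < n by omega)
  have hγ : gammaTh (Fintype.card X) M β n ≤ s ^ 2 / 4 := by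
    have hlog_n : Real.log (1 / β) / n ≤ s ^ 2 / 8 := by
      rw [div_le_iff₀ hnpos, mul_comm, ← div_le_iff₀ (by positivity)]
      push_cast at hn
      linarith
    linarith [gammaTh_le_add_log (Fintype.card X) M hβ0 hβ1 n, hN n (by omega)]
  refine (measure_mono fun ω (hω : n < _) => ?_).trans
    (hν.measure_exists_le_abs_emp_sub_le ((hP i).push (hA₀ i).1) (by positivity)
      (min_le_right _ _) (by omega))
  by_contra hfar
  simp only [Set.mem_ofPred_eq, not_exists, not_le] at hfar
  have hZ := le_Zstat_of_abs_emp_sub_lt hM hP hc hε.le hc_le hsep hA₀ (by omega)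
    fun a => (hfar a).trans_le (min_le_left _ _)
  have hT := ENat.toNat_le_of_le_natCast
    (Tstar_le_of_gammaTh_le_Zstat i (by omega) (hγ.trans hZ))
  omega

theorem exists_measure_le_Tstar_div_log_le (hM : 2 ≤ M) (hP : ∀ i, IsDist (P i))
    (hK : IsCompact {A : Fin M → X → X → ℝ | ∀ i, A i ∈ Adm d Δ (P i)}) {ε : ℝ} (hε : 0 < ε)
    (hsep : ∀ i j, i ≠ j → ∀ Ai ∈ Adm d Δ (P i), ∀ Aj ∈ Adm d Δ (P j),
      ε ≤ KL (push (P i) Ai) (push (P j) Aj))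
    {A₀ : Fin M → X → X → ℝ} (hA₀ : ∀ i, A₀ i ∈ Adm d Δ (P i)) {i : Fin M}
    {ν : Measure (ℕ → X)} (hν : IsIID ν (push (P i) (A₀ i))) :
    ∃ C a η₀ : ℝ, 0 ≤ C ∧ 0 < a ∧ ∀ β, 0 < β → β ≤ 1 / 2 → ∀ t, η₀ ≤ t →
      ν {ω | t ≤ ((Tstar P d Δ β ω).toNat : ℝ) / Real.log (1 / β)}
        ≤ ENNReal.ofReal (C * Real.exp (-a * t)) := by
  obtain ⟨θ, hθ, C, κ, hC, hκ, N, h⟩ := exists_measure_lt_Tstar_le hM hP hK hε hsep hA₀ hν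
  have hlog2 : 0 < Real.log 2 := Real.log_pos one_lt_two
  refine ⟨C * Real.exp κ, κ * Real.log 2, (N + 1) / Real.log 2 + 1 / θ, by positivity,
    by positivity, fun β hβ0 hβ t ht => ?_⟩
  set L := Real.log (1 / β)
  have hL : Real.log 2 ≤ L := Real.log_le_log two_pos (by rw [le_div_iff₀ hβ0]; linarith)
  have hL0 : 0 < L := hlog2.trans_le hL
  have ht0 : 0 ≤ t := le_trans (by positivity) ht
  have hr : N + L / θ + 1 ≤ t * L :=
    calc N + L / θ + 1 ≤ (N + 1) * (L / Real.log 2) + L / θ := by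
          have : 1 ≤ L / Real.log 2 := (one_le_div hlog2).2 hL
          nlinarith
      _ = ((N + 1) / Real.log 2 + 1 / θ) * L := by ring
      _ ≤ t * L := by gcongr
  have hset : {ω | t ≤ ((Tstar P d Δ β ω).toNat : ℝ) / L}
      = {ω | t * L ≤ (Tstar P d Δ β ω).toNat} := by
    ext ω
    exact le_div_iff₀ hL0
  rw [hset]
  refine (measure_le_le_of_measure_lt_le (fun ω => (Tstar P d Δ β ω).toNat) hC hκ.le
    (by positivity) (fun n hn => h β hβ0 (by linarith) n hn) hr).trans
    (ENNReal.ofReal_le_ofReal ?_)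
  refine mul_le_mul_of_nonneg_left (Real.exp_le_exp.2 ?_) (by positivity)
  nlinarith [mul_le_mul_of_nonneg_left hL (mul_nonneg hκ.le ht0)]

end SequentialTest

theorem Tstar_uniformly_integrable_general {X : Type*} [Fintype X] [DecidableEq X]
    [MeasurableSpace X]
    {M : ℕ} (hM : 2 ≤ M) (P : Fin M → X → ℝ) (hP : ∀ i, IsDist (P i))
    (d : (X → ℝ) → (X → ℝ) → ℝ) (Δ : ℝ)
    (hcompact : IsCompact {A : Fin M → X → X → ℝ | ∀ i, A i ∈ Adm d Δ (P i)})
    (ε : ℝ) (hε : 0 < ε)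
    (hsep : ∀ i j, i ≠ j → ∀ Ai ∈ Adm d Δ (P i), ∀ Aj ∈ Adm d Δ (P j),
      ε ≤ KL (push (P i) Ai) (push (P j) Aj))
    (Atil : Fin M → X → X → ℝ) (hAtil : ∀ i, Atil i ∈ Adm d Δ (P i))
    (μ : Fin M → Measure (ℕ → X)) (hμ : ∀ i, IsIID (μ i) (push (P i) (Atil i))) :
    ∃ ε₀ : ℝ, 0 < ε₀ ∧ ε₀ < 1 ∧ ∀ i : Fin M,
      Tendsto (fun η : ℝ =>
          sSup {e : ℝ | ∃ α : ℝ, 0 < α ∧ α ≤ ε₀ ∧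
            e = ∫ ω in {ω | η ≤ ((Tstar P d Δ α ω).toNat : ℝ) / Real.log (1 / α)},
              ((Tstar P d Δ α ω).toNat : ℝ) / Real.log (1 / α) ∂(μ i)})
        atTop (𝓝 0) := by
  refine ⟨1 / 2, by norm_num, by norm_num, fun i => ?_⟩
  obtain ⟨C, a, η₀, hC, ha, htail⟩ :=
    exists_measure_le_Tstar_div_log_le hM hP hcompact hε hsep hAtil (hμ i)
  have hT_div_log_nonneg : ∀ α : ℝ, 0 < α ∧ α ≤ 1 / 2 → ∀ ω,
      0 ≤ ((Tstar P d Δ α ω).toNat : ℝ) / Real.log (1 / α) := fun α hα ω =>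
    div_nonneg (Nat.cast_nonneg _) (Real.log_nonneg (by rw [le_div_iff₀ hα.1]; linarith))
  have hexp : Tendsto (fun η => Real.exp (-a * η / 2)) atTop (𝓝 0) :=
    (Real.tendsto_exp_atBot.comp
      (tendsto_id.const_mul_atTop_of_neg (by linarith : -a / 2 < 0))).congr
        fun η => congrArg Real.exp (by simp only [id]; ring)
  have hB : Tendsto (fun η => C * Real.exp (-a * η / 2) / (1 - Real.exp (-a / 2))) atTop (𝓝 0) := by
    simpa using (hexp.const_mul C).div_const _
  simpa only [and_assoc] using tendsto_sSup_of_nonneg_of_le (p := fun α => 0 < α ∧ α ≤ 1 / 2)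
    ⟨1 / 2, by norm_num⟩ hB (fun α η hα => integral_nonneg (hT_div_log_nonneg α hα))
    ((eventually_ge_atTop η₀).mono fun η hη α hα =>
      setIntegral_le_of_measure_le_exp (hT_div_log_nonneg α hα) hC ha
        fun t ht => htail α hα.1 hα.2 t (hη.trans ht))

/-- uniform integrability of the family { T*/log(1/α) : 0 < α ≤ ε₀ }. -/
theorem Tstar_uniformly_integrable {X : Type*} [Fintype X] [DecidableEq X]
    [MeasurableSpace X]
    {M : ℕ} (hM : 2 ≤ M) (P : Fin M → X → ℝ) (hP : ∀ i, IsDist (P i))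
    (hPd : ∀ i j, i ≠ j → P i ≠ P j)
    (d : (X → ℝ) → (X → ℝ) → ℝ) (Δ : ℝ) (hΔ : 0 < Δ)
    (hcompact : IsCompact {A : Fin M → X → X → ℝ | ∀ i, A i ∈ Adm d Δ (P i)})
    (ε : ℝ) (hε : 0 < ε)
    (hsep : ∀ i j, i ≠ j → ∀ Ai ∈ Adm d Δ (P i), ∀ Aj ∈ Adm d Δ (P j),
      ε ≤ KL (push (P i) Ai) (push (P j) Aj))
    (Atil : Fin M → X → X → ℝ) (hAtil : ∀ i, Atil i ∈ Adm d Δ (P i))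
    (μ : Fin M → Measure (ℕ → X)) (hμ : ∀ i, IsIID (μ i) (push (P i) (Atil i))) :
    ∃ ε₀ : ℝ, 0 < ε₀ ∧ ε₀ < 1 ∧ ∀ i : Fin M,
      Tendsto (fun η : ℝ =>
          sSup {e : ℝ | ∃ α : ℝ, 0 < α ∧ α ≤ ε₀ ∧
            e = ∫ ω in {ω | η ≤ ((Tstar P d Δ α ω).toNat : ℝ) / Real.log (1 / α)},
              ((Tstar P d Δ α ω).toNat : ℝ) / Real.log (1 / α) ∂(μ i)})
        atTop (𝓝 0) :=
  Tstar_uniformly_integrable_general hM P hP d Δ hcompact ε hε hsep Atil hAtil μ hμ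

end

end AHT
end

section
/- For every α ∈ (0,1), the non-aware test Φ*_NA = (τ*, δ*_NA) belongs to Ŝ_D(α): for every i ∈ {0,1} and every common channel Ã ∈ Ŝ_A(Δ), the probability under H_i that the test accepts the wrong hypothesis is at most α. -/
/-!
Under `H_i` with common channel `Ã`, the samples are i.i.d. with law `Q = P_i Ã`, and the test can
accept the wrong hypothesis at time `n` only if `γ_n ≤ min_A D(Q̂_n ‖ P_i A) ≤ D(Q̂_n ‖ Q)`.
By the method of types, `P(D(Q̂_n ‖ Q) ≥ γ) ≤ (n + 1)^|𝒳| e^{-nγ}`; at `γ = γ_n` this is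
`(α / C) e^{-n^{0.15}}`, and the union bound over `n ≥ 1` sums to exactly `α` by the choice of `C`.
-/

open MeasureTheory Filter Finset Set Topology
open scoped ENNReal NNReal ENat

namespace AHT

noncomputable section

variable {X : Type*}

lemma summable_exp_neg_rpow {p : ℝ} (hp : 0 < p) :
    Summable fun n : ℕ => Real.exp (-(n : ℝ) ^ p) := by
  -- `log x = o(x ^ p)` gives `exp (-x ^ p) ≤ x⁻²` eventually.
  have hlog : ∀ᶠ x : ℝ in atTop, ‖Real.log x‖ ≤ 2⁻¹ * ‖x ^ p‖ :=
    (isLittleO_log_rpow_atTop hp).def (by norm_num)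
  have hbound : ∀ᶠ x : ℝ in atTop, Real.exp (-x ^ p) ≤ 1 / x ^ 2 := by
    filter_upwards [hlog, eventually_ge_atTop 1] with x hx hx1
    have hx0 : 0 < x := by linarith
    rw [Real.norm_of_nonneg (Real.log_nonneg hx1),
      Real.norm_of_nonneg (Real.rpow_nonneg hx0.le _)] at hx
    calc Real.exp (-x ^ p) ≤ Real.exp (-(2 * Real.log x)) := Real.exp_le_exp.mpr (by linarith)
      _ = 1 / x ^ 2 := by
        rw [Real.exp_neg, show 2 * Real.log x = Real.log (x ^ 2) by rw [Real.log_pow]; norm_num,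
          Real.exp_log (by positivity), one_div]
  refine summable_of_isBigO_nat (Real.summable_one_div_nat_pow.mpr one_lt_two) ?_
  refine Asymptotics.IsBigO.of_bound 1 ?_
  filter_upwards [tendsto_natCast_atTop_atTop.eventually hbound] with n hn
  rw [Real.norm_of_nonneg (Real.exp_pos _).le, one_mul, Real.norm_of_nonneg (by positivity)]
  exact hn

lemma summable_Cζ : Summable fun n : ℕ => Real.exp (-((n : ℝ) + 1) ^ (0.15 : ℝ)) := by
  simpa using (summable_nat_add_iff 1).mpr (summable_exp_neg_rpow (p := 0.15) (by norm_num))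

lemma Cζ_pos : 0 < Cζ :=
  summable_Cζ.tsum_pos (fun _ => (Real.exp_pos _).le) 0 (Real.exp_pos _)

lemma pow_mul_exp_neg_mul_gammaNA (K : ℕ) {α : ℝ} (hα : 0 < α) {n : ℕ} (hn : 0 < n) :
    ((n : ℝ) + 1) ^ K * Real.exp (-n * gammaNA K α n) =
      α / Cζ * Real.exp (-(n : ℝ) ^ (0.15 : ℝ)) := by
  have hn' : (0 : ℝ) < n := by exact_mod_cast hn
  have hrpow : (n : ℝ) * (1 / (n : ℝ) ^ (0.85 : ℝ)) = (n : ℝ) ^ (0.15 : ℝ) := by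
    rw [mul_one_div, show (0.15 : ℝ) = 1 - 0.85 by norm_num, Real.rpow_sub hn', Real.rpow_one]
  have hexp : -n * gammaNA K α n =
      -Real.log (Cζ / α) + -(n : ℝ) ^ (0.15 : ℝ) + -(K * Real.log ((n : ℝ) + 1)) := by
    rw [gammaNA, neg_mul, mul_add, mul_add, hrpow, mul_div_cancel₀ _ hn'.ne',
      mul_div_cancel₀ _ hn'.ne']
    ring
  rw [hexp, Real.exp_add, Real.exp_add, Real.exp_neg, Real.exp_neg (K * _), Real.exp_log
    (div_pos Cζ_pos hα), ← Real.log_pow, Real.exp_log (by positivity), inv_div]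
  field_simp

lemma sum_sub_sum_le_KL [Fintype X] {P Q : X → ℝ} (hP : ∀ a, 0 ≤ P a) (hQ : ∀ a, 0 < Q a) :
    ∑ a, P a - ∑ a, Q a ≤ KL P Q := by
  rw [← sum_sub_distrib, KL]
  refine sum_le_sum fun a _ => ?_
  have hQa := (hQ a).ne'
  have hkl : Q a * InformationTheory.klFun (P a / Q a) =
      P a * Real.log (P a / Q a) - (P a - Q a) := by
    rw [InformationTheory.klFun]; field_simp; ring
  have := mul_nonneg (hQ a).le (InformationTheory.klFun_nonneg (div_nonneg (hP a) (hQ a).le))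
  linarith

lemma sum_push [Fintype X] {A : X → X → ℝ} (hA : RowStoch A) (P : X → ℝ) :
    ∑ y, push P A y = ∑ x, P x := by
  simp only [push]
  rw [sum_comm]
  exact sum_congr rfl fun x _ => by rw [← mul_sum, hA.2 x, mul_one]

lemma bddBelow_KL_push [Fintype X] {p P : X → ℝ} (hp : ∀ a, 0 ≤ p a) {S : Set (X → X → ℝ)}
    (hS : ∀ A ∈ S, RowStoch A ∧ ∀ y, 0 < push P A y) :
    BddBelow {r | ∃ A ∈ S, r = KL p (push P A)} := by
  refine ⟨∑ a, p a - ∑ x, P x, ?_⟩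
  rintro r ⟨A, hA, rfl⟩
  rw [← sum_push (hS A hA).1 P]
  exact sum_sub_sum_le_KL hp (hS A hA).2

section Types

variable [DecidableEq X] {n : ℕ}

def wordCount (v : Fin n → X) (a : X) : ℕ := #{k | v k = a}

def wordType (v : Fin n → X) (a : X) : ℝ := wordCount v a / n

lemma wordType_nonneg (v : Fin n → X) (a : X) : 0 ≤ wordType v a := by
  unfold wordType; positivity

lemma wordCount_le (v : Fin n → X) (a : X) : wordCount v a ≤ n :=
  (card_filter_le _ _).trans_eq (card_fin n)

variable [Fintype X]

lemma emp_eq_wordType (ω : ℕ → X) : emp n ω = wordType fun k : Fin n => ω k := by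
  ext a
  simp only [emp, wordType, wordCount, Finset.card_filter]
  rw [← Fin.sum_univ_eq_sum_range (fun k => if ω k = a then 1 else 0) n]

lemma sum_wordCount (v : Fin n → X) : ∑ a, wordCount v a = n := by
  simpa [wordCount] using (Finset.card_eq_sum_card_fiberwise (f := v) (s := univ) (t := univ)
    fun _ _ => mem_univ _).symm

lemma prod_comp_eq_prod_pow_wordCount {M : Type*} [CommMonoid M] (f : X → M) (v : Fin n → X) :
    ∏ k, f (v k) = ∏ a, f a ^ wordCount v a := by
  rw [← Fintype.prod_fiberwise' v f]
  refine prod_congr rfl fun a _ => ?_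
  rw [prod_const, wordCount, card_univ, Fintype.card_subtype]

lemma prod_eq_exp_neg_mul_KL_mul {Q : X → ℝ} (hQ : ∀ a, 0 < Q a) (v : Fin n → X) :
    ∏ k, Q (v k) = Real.exp (-n * KL (wordType v) Q) * ∏ k, wordType v (v k) := by
  have hletter : ∀ a, Q a ^ wordCount v a =
      Real.exp (-n * (wordType v a * Real.log (wordType v a / Q a))) *
        wordType v a ^ wordCount v a := by
    intro a
    rcases Nat.eq_zero_or_pos (wordCount v a) with h0 | hpos
    · simp [wordType, h0]
    have hn : (0 : ℝ) < n := by exact_mod_cast hpos.trans_le (wordCount_le v a)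
    have hp : 0 < wordType v a := by unfold wordType; positivity
    have hexp : -n * (wordType v a * Real.log (wordType v a / Q a)) =
        wordCount v a * Real.log (Q a / wordType v a) := by
      rw [← inv_div, Real.log_inv, wordType]; field_simp
    rw [hexp, Real.exp_nat_mul, Real.exp_log (div_pos (hQ a) hp), ← mul_pow,
      div_mul_cancel₀ _ hp.ne']
  rw [prod_comp_eq_prod_pow_wordCount, prod_comp_eq_prod_pow_wordCount,
    prod_congr rfl fun a _ => hletter a, prod_mul_distrib, ← Real.exp_sum, KL, mul_sum]

lemma sum_prod_wordType_le :
    ∑ v : Fin n → X, ∏ k, wordType v (v k) ≤ ((n : ℝ) + 1) ^ Fintype.card X := by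
  -- Each type class has probability at most one under its own type, and there are at most
  -- `(n + 1) ^ |X|` types.
  let T : (Fin n → X) → X → Fin (n + 1) :=
    fun v a => ⟨wordCount v a, Nat.lt_succ_of_le (wordCount_le v a)⟩
  have hclass : ∀ t : X → Fin (n + 1),
      ∑ v with T v = t, ∏ k, wordType v (v k) ≤ 1 := by
    intro t
    rcases (univ.filter fun v => T v = t).eq_empty_or_nonempty with he | ⟨v₀, hv₀⟩
    · simp [he]
    have hsum : ∑ a, ((t a : ℕ) : ℝ) / n = n / n := by
      rw [← sum_div, ← (mem_filter.mp hv₀).2]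
      exact_mod_cast congrArg (fun m : ℕ => (m : ℝ) / n) (sum_wordCount v₀)
    calc ∑ v with T v = t, ∏ k, wordType v (v k)
        = ∑ v with T v = t, ∏ k, ((t (v k) : ℕ) : ℝ) / n :=
          sum_congr rfl fun v hv => by rw [← (mem_filter.mp hv).2]; rfl
      _ ≤ ∑ v : Fin n → X, ∏ k, ((t (v k) : ℕ) : ℝ) / n :=
          sum_le_sum_of_subset_of_nonneg (filter_subset _ _)
            fun _ _ _ => prod_nonneg fun _ _ => by positivity
      _ = ((n : ℝ) / n) ^ n := by
          rw [← hsum, Fintype.sum_pow]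
      _ ≤ 1 := pow_le_one₀ (by positivity) (div_self_le_one _)
  calc ∑ v : Fin n → X, ∏ k, wordType v (v k)
      = ∑ t, ∑ v with T v = t, ∏ k, wordType v (v k) := (sum_fiberwise _ T _).symm
    _ ≤ ∑ _t : X → Fin (n + 1), (1 : ℝ) := sum_le_sum fun t _ => hclass t
    _ = ((n : ℝ) + 1) ^ Fintype.card X := by simp

lemma sum_prod_le_exp_of_le_KL {Q : X → ℝ} (hQ : ∀ a, 0 < Q a) (γ : ℝ) :
    ∑ v : Fin n → X with γ ≤ KL (wordType v) Q, ∏ k, Q (v k) ≤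
      ((n : ℝ) + 1) ^ Fintype.card X * Real.exp (-n * γ) := by
  calc ∑ v : Fin n → X with γ ≤ KL (wordType v) Q, ∏ k, Q (v k)
      ≤ ∑ v : Fin n → X with γ ≤ KL (wordType v) Q,
          Real.exp (-n * γ) * ∏ k, wordType v (v k) := by
        refine sum_le_sum fun v hv => ?_
        rw [prod_eq_exp_neg_mul_KL_mul hQ]
        have hKL : γ ≤ KL (wordType v) Q := (mem_filter.mp hv).2
        refine mul_le_mul_of_nonneg_right (Real.exp_le_exp.mpr ?_)
          (prod_nonneg fun _ _ => wordType_nonneg _ _)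
        exact mul_le_mul_of_nonpos_left hKL (neg_nonpos.mpr n.cast_nonneg)
    _ ≤ Real.exp (-n * γ) * ∑ v : Fin n → X, ∏ k, wordType v (v k) := by
        rw [← mul_sum]
        exact mul_le_mul_of_nonneg_left (sum_le_sum_of_subset_of_nonneg (filter_subset _ _)
          fun _ _ _ => prod_nonneg fun _ _ => wordType_nonneg _ _) (Real.exp_pos _).le
    _ ≤ ((n : ℝ) + 1) ^ Fintype.card X * Real.exp (-n * γ) := by
        rw [mul_comm]
        exact mul_le_mul_of_nonneg_right sum_prod_wordType_le (Real.exp_pos _).le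

open Classical in
lemma measure_emp_mem_le [MeasurableSpace X] {Q : X → ℝ} (hQ : ∀ a, 0 ≤ Q a)
    {μ : Measure (ℕ → X)} (hμ : IsIID μ Q) (n : ℕ) (S : Set (X → ℝ)) :
    μ {ω | emp n ω ∈ S} ≤
      ENNReal.ofReal (∑ v : Fin n → X with wordType v ∈ S, ∏ k, Q (v k)) := by
  have hcover : {ω | emp n ω ∈ S} ⊆
      ⋃ v ∈ ({v : Fin n → X | wordType v ∈ S} : Finset _), {ω | ∀ k : Fin n, ω k = v k} := by
    intro ω hω
    refine Set.mem_biUnion (x := fun k : Fin n => ω k) ?_ fun _ => rfl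
    simpa [← emp_eq_wordType] using hω
  calc μ {ω | emp n ω ∈ S}
      ≤ ∑ v : Fin n → X with wordType v ∈ S, μ {ω | ∀ k : Fin n, ω k = v k} :=
        (measure_mono hcover).trans (measure_biUnion_finset_le _ _)
    _ = _ := by
        rw [ENNReal.ofReal_sum_of_nonneg fun v _ => prod_nonneg fun k _ => hQ (v k)]
        exact sum_congr rfl fun v _ => hμ.2 n v

lemma measure_le_KL_emp_le [MeasurableSpace X] {Q : X → ℝ} (hQ : ∀ a, 0 < Q a)
    {μ : Measure (ℕ → X)} (hμ : IsIID μ Q) (γ : ℝ) (n : ℕ) :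
    μ {ω | γ ≤ KL (emp n ω) Q} ≤
      ENNReal.ofReal (((n : ℝ) + 1) ^ Fintype.card X * Real.exp (-n * γ)) :=
  (measure_emp_mem_le (fun a => (hQ a).le) hμ n {p | γ ≤ KL p Q}).trans
    (ENNReal.ofReal_le_ofReal (sum_prod_le_exp_of_le_KL hQ γ))

end Types

section Errors

variable [Fintype X] [DecidableEq X] [MeasurableSpace X]

lemma measure_exists_gammaNA_le_KL_emp_le {Q : X → ℝ} (hQ : ∀ a, 0 < Q a)
    {μ : Measure (ℕ → X)} (hμ : IsIID μ Q) {α : ℝ} (hα : 0 < α) :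
    μ {ω | ∃ n : ℕ, 1 ≤ n ∧ gammaNA (Fintype.card X) α n ≤ KL (emp n ω) Q} ≤
      ENNReal.ofReal α := by
  have hcover : {ω | ∃ n : ℕ, 1 ≤ n ∧ gammaNA (Fintype.card X) α n ≤ KL (emp n ω) Q} ⊆
      ⋃ m : ℕ, {ω | gammaNA (Fintype.card X) α (m + 1) ≤ KL (emp (m + 1) ω) Q} := by
    rintro ω ⟨n, hn, hγ⟩
    obtain ⟨m, rfl⟩ := Nat.exists_eq_add_of_le' hn
    exact Set.mem_iUnion.mpr ⟨m, hγ⟩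
  have hterm : ∀ m : ℕ, μ {ω | gammaNA (Fintype.card X) α (m + 1) ≤ KL (emp (m + 1) ω) Q} ≤
      ENNReal.ofReal (α / Cζ * Real.exp (-((m : ℝ) + 1) ^ (0.15 : ℝ))) := by
    intro m
    refine (measure_le_KL_emp_le hQ hμ _ (m + 1)).trans_eq ?_
    rw [pow_mul_exp_neg_mul_gammaNA _ hα m.succ_pos]
    push_cast
    rfl
  calc μ {ω | ∃ n : ℕ, 1 ≤ n ∧ gammaNA (Fintype.card X) α n ≤ KL (emp n ω) Q}
      ≤ ∑' m : ℕ, ENNReal.ofReal (α / Cζ * Real.exp (-((m : ℝ) + 1) ^ (0.15 : ℝ))) :=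
        (measure_mono hcover).trans ((measure_iUnion_le _).trans (ENNReal.tsum_le_tsum hterm))
    _ = ENNReal.ofReal α := by
        rw [← ENNReal.ofReal_tsum_of_nonneg
          (fun _ => mul_nonneg (div_nonneg hα.le Cζ_pos.le) (Real.exp_pos _).le)
          (summable_Cζ.mul_left _), tsum_mul_left, ← Cζ, div_mul_cancel₀ _ Cζ_pos.ne']

lemma measure_gammaNA_le_sInf_KL_emp_push_le {P : X → ℝ}
    {S : Set (X → X → ℝ)} (hS : ∀ A ∈ S, RowStoch A ∧ ∀ y, 0 < push P A y) {B : X → X → ℝ}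
    (hB : B ∈ S) {μ : Measure (ℕ → X)} (hμ : IsIID μ (push P B)) {α : ℝ} (hα : 0 < α) :
    μ {ω | ∃ n : ℕ, 1 ≤ n ∧
        gammaNA (Fintype.card X) α n ≤ sInf {r | ∃ A ∈ S, r = KL (emp n ω) (push P A)}} ≤
      ENNReal.ofReal α := by
  refine (measure_mono ?_).trans (measure_exists_gammaNA_le_KL_emp_le (hS B hB).2 hμ hα)
  rintro ω ⟨n, hn, hγ⟩
  have hemp : ∀ a, 0 ≤ emp n ω a := fun a => by unfold emp; positivity
  exact ⟨n, hn, hγ.trans (csInf_le (bddBelow_KL_push hemp hS) ⟨B, hB, rfl⟩)⟩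

end Errors

theorem na_test_mem_SD_general {X : Type*} [Fintype X] [DecidableEq X] [MeasurableSpace X]
    (P0 P1 : X → ℝ)
    (d : (X → ℝ) → (X → ℝ) → ℝ) (Δ : ℝ)
    (α : ℝ) (hα0 : 0 < α)
    (Atil : X → X → ℝ) (hAtil : Atil ∈ AdmNA d Δ P0 P1)
    (μ0 μ1 : Measure (ℕ → X)) (hμ0 : IsIID μ0 (push P0 Atil)) (hμ1 : IsIID μ1 (push P1 Atil)) :
    μ0 {ω | ∃ n : ℕ, 1 ≤ n ∧ tauNA P0 P1 d Δ α ω = (n : ℕ∞) ∧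
        gammaNA (Fintype.card X) α n ≤
          sInf {r : ℝ | ∃ A ∈ AdmNA d Δ P0 P1, r = KL (emp n ω) (push P0 A)}} ≤
      ENNReal.ofReal α ∧
    μ1 {ω | ∃ n : ℕ, 1 ≤ n ∧ tauNA P0 P1 d Δ α ω = (n : ℕ∞) ∧
        gammaNA (Fintype.card X) α n ≤
          sInf {r : ℝ | ∃ A ∈ AdmNA d Δ P0 P1, r = KL (emp n ω) (push P1 A)}} ≤
      ENNReal.ofReal α := by
  have forget_tau : ∀ ω, ∀ E : ℕ → Prop, (∃ n : ℕ, 1 ≤ n ∧ tauNA P0 P1 d Δ α ω = n ∧ E n) →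
      ∃ n : ℕ, 1 ≤ n ∧ E n := fun _ _ ⟨n, hn, _, hE⟩ => ⟨n, hn, hE⟩
  constructor
  · exact (measure_mono fun ω => forget_tau ω _).trans
      (measure_gammaNA_le_sInf_KL_emp_push_le (fun A hA => ⟨hA.1, hA.2.2.1⟩) hAtil hμ0 hα0)
  · exact (measure_mono fun ω => forget_tau ω _).trans
      (measure_gammaNA_le_sInf_KL_emp_push_le (fun A hA => ⟨hA.1, hA.2.2.2⟩) hAtil hμ1 hα0)

/-- for every α ∈ (0,1), the non-aware test Φ*_NA belongs to Ŝ_D(α):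
under each hypothesis and any admissible common channel, the probability of accepting
the wrong hypothesis is at most α. -/
theorem na_test_mem_SD {X : Type*} [Fintype X] [DecidableEq X] [MeasurableSpace X]
    (P0 P1 : X → ℝ) (h0 : IsDist P0) (h1 : IsDist P1) (h01 : P0 ≠ P1)
    (d : (X → ℝ) → (X → ℝ) → ℝ) (Δ : ℝ) (hΔ : 0 < Δ)
    (α : ℝ) (hα0 : 0 < α) (hα1 : α < 1)
    (Atil : X → X → ℝ) (hAtil : Atil ∈ AdmNA d Δ P0 P1)
    (μ0 μ1 : Measure (ℕ → X)) (hμ0 : IsIID μ0 (push P0 Atil)) (hμ1 : IsIID μ1 (push P1 Atil)) :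
    μ0 {ω | ∃ n : ℕ, 1 ≤ n ∧ tauNA P0 P1 d Δ α ω = (n : ℕ∞) ∧
        gammaNA (Fintype.card X) α n ≤
          sInf {r : ℝ | ∃ A ∈ AdmNA d Δ P0 P1, r = KL (emp n ω) (push P0 A)}} ≤
      ENNReal.ofReal α ∧
    μ1 {ω | ∃ n : ℕ, 1 ≤ n ∧ tauNA P0 P1 d Δ α ω = (n : ℕ∞) ∧
        gammaNA (Fintype.card X) α n ≤
          sInf {r : ℝ | ∃ A ∈ AdmNA d Δ P0 P1, r = KL (emp n ω) (push P1 A)}} ≤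
      ENNReal.ofReal α :=
  na_test_mem_SD_general P0 P1 d Δ α hα0 Atil hAtil μ0 μ1 hμ0 hμ1

end

end AHT
end
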